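/- arXiv:1901.03218 — 2 statements merged into one kernel-verified Lean document; each statement's English description precedes it below -/
import Mathlib

section
/- Let H be a nontrivial connected graph and let G be a graph with no isolatable vertices such that G × H is well-covered. Then for every independent set A of G with |A| = k (1 ≤ k ≤ α(G)), one has |N[A]| = k·n(G)/α(G). -/
/-- The direct (tensor) product of two simple graphs. -/
def directProd {V W : Type*} (G : SimpleGraph V) (H : SimpleGraph W) :
    SimpleGraph (V × W) where
  Adj x y := G.Adj x.1 y.1 ∧ H.Adj x.2 y.2
  symm := ⟨fun x y h => ⟨h.1.symm, h.2.symm⟩⟩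
  loopless := ⟨fun x h => G.loopless.irrefl x.1 h.1⟩

/-- `s` is an independent set of `G`. -/
def IsIndep {V : Type*} (G : SimpleGraph V) (s : Set V) : Prop :=
  ∀ ⦃u⦄, u ∈ s → ∀ ⦃v⦄, v ∈ s → ¬ G.Adj u v

/-- `s` is a maximal independent set of `G`. -/
def IsMaxIndep {V : Type*} (G : SimpleGraph V) (s : Set V) : Prop :=
  IsIndep G s ∧ ∀ t, IsIndep G t → s ⊆ t → s = t

/-- A graph is well-covered if all maximal independent sets have the same cardinality. -/
def WellCovered {V : Type*} (G : SimpleGraph V) : Prop :=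
  ∀ s t, IsMaxIndep G s → IsMaxIndep G t → s.ncard = t.ncard

/-- The independence number of `G`. -/
noncomputable def indepNum {V : Type*} (G : SimpleGraph V) : ℕ :=
  sSup {n | ∃ s, IsIndep G s ∧ s.ncard = n}

/-- The independent domination number of `G`: the minimum size of a maximal independent set. -/
noncomputable def iNum {V : Type*} (G : SimpleGraph V) : ℕ :=
  sInf {n | ∃ s, IsMaxIndep G s ∧ s.ncard = n}

/-- The closed neighborhood `N[s]` of a set of vertices. -/
def closedNbhd {V : Type*} (G : SimpleGraph V) (s : Set V) : Set V :=
  s ∪ {v | ∃ u ∈ s, G.Adj u v}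

/-- `G` has no isolated vertices. -/
def NoIsolated {V : Type*} (G : SimpleGraph V) : Prop := ∀ v, ∃ u, G.Adj v u

/-- A vertex `v` is isolatable if some independent set `I` leaves `v` isolated in `G - N[I]`. -/
def Isolatable {V : Type*} (G : SimpleGraph V) (v : V) : Prop :=
  ∃ I : Set V, IsIndep G I ∧ v ∉ closedNbhd G I ∧ ∀ u ∉ closedNbhd G I, ¬ G.Adj v u

/-!
Fix a maximal independent set `D` of `H`. For an independent set `A` of `G`, every vertex outside
`N[A]` keeps a neighbour outside `N[A]` (no vertex of `G` is isolatable), and this makes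
`A × V(H) ∪ (V(G) \ N[A]) × D` a maximal independent set of `G × H`, of size
`|A| n(H) + (n(G) - |N[A]|) |D|`. Well-coveredness makes this size independent of `A`:
comparing `A` with `∅` gives `|A| n(H) = |N[A]| |D|`, and a maximum independent set (for which
`N[A]` is everything) gives `α(G) n(H) = n(G) |D|`. Eliminating `n(H) / |D|` yields
`|N[A]| α(G) = |A| n(G)`.
-/

section IndependentSets

variable {V : Type*} {G : SimpleGraph V} {s : Set V}

theorem IsIndep.empty : IsIndep G ∅ := fun _ hu => absurd hu (Set.notMem_empty _)

theorem IsMaxIndep.exists_adj (h : IsMaxIndep G s) {v : V} (hv : v ∉ s) :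
    ∃ u ∈ s, G.Adj v u := by
  by_contra! hc
  have hind : IsIndep G (insert v s) := by
    rintro a (rfl | ha) b (rfl | hb) hab
    · exact G.loopless.irrefl _ hab
    · exact hc b hb hab
    · exact hc a ha hab.symm
    · exact h.1 ha hb hab
  exact hv (h.2 _ hind (Set.subset_insert _ _) ▸ Set.mem_insert v s)

theorem isMaxIndep_of_forall_exists_adj (hs : IsIndep G s)
    (hdom : ∀ v ∉ s, ∃ u ∈ s, G.Adj v u) : IsMaxIndep G s := by
  refine ⟨hs, fun t ht hst => hst.antisymm fun v hv => ?_⟩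
  by_contra hvs
  obtain ⟨u, hu, hvu⟩ := hdom v hvs
  exact ht hv (hst hu) hvu

theorem IsIndep.exists_isMaxIndep_superset [Finite V] (hs : IsIndep G s) :
    ∃ M, IsMaxIndep G M ∧ s ⊆ M := by
  obtain ⟨M, ⟨hM, hsM⟩, hmax⟩ :=
    Set.Finite.exists_maximal (s := {t | IsIndep G t ∧ s ⊆ t}) (Set.toFinite _) ⟨s, hs, le_rfl⟩
  exact ⟨M, ⟨hM, fun t ht hMt => hMt.antisymm (hmax ⟨ht, hsM.trans hMt⟩ hMt)⟩, hsM⟩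

theorem IsMaxIndep.nonempty [Nonempty V] (h : IsMaxIndep G s) : s.Nonempty := by
  obtain ⟨v⟩ := ‹Nonempty V›
  by_cases hv : v ∈ s
  · exact ⟨v, hv⟩
  · obtain ⟨u, hu, -⟩ := h.exists_adj hv
    exact ⟨u, hu⟩

theorem bddAbove_indepSet_ncard [Finite V] :
    BddAbove {n | ∃ s, IsIndep G s ∧ s.ncard = n} :=
  ⟨Nat.card V, fun _ ⟨s, _, hn⟩ => hn ▸ Set.ncard_le_card s⟩

theorem IsIndep.ncard_le_indepNum [Finite V] (hs : IsIndep G s) : s.ncard ≤ indepNum G :=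
  le_csSup bddAbove_indepSet_ncard ⟨s, hs, rfl⟩

theorem exists_isMaxIndep_ncard_eq_indepNum [Finite V] :
    ∃ M, IsMaxIndep G M ∧ M.ncard = indepNum G := by
  obtain ⟨s, hs, hcard⟩ : ∃ s, IsIndep G s ∧ s.ncard = indepNum G :=
    Nat.sSup_mem (s := {n | ∃ s, IsIndep G s ∧ s.ncard = n}) ⟨0, ∅, .empty, Set.ncard_empty V⟩
      bddAbove_indepSet_ncard
  obtain ⟨M, hM, hsM⟩ := hs.exists_isMaxIndep_superset
  exact ⟨M, hM, (hM.1.ncard_le_indepNum).antisymm (hcard ▸ Set.ncard_le_ncard hsM)⟩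

theorem closedNbhd_empty : closedNbhd G ∅ = ∅ := by
  simp [closedNbhd]

theorem IsMaxIndep.closedNbhd_eq_univ (h : IsMaxIndep G s) : closedNbhd G s = Set.univ := by
  refine Set.eq_univ_of_forall fun v => ?_
  by_cases hv : v ∈ s
  · exact Or.inl hv
  · obtain ⟨u, hu, hvu⟩ := h.exists_adj hv
    exact Or.inr ⟨u, hu, hvu.symm⟩

theorem exists_adj_notMem_closedNbhd {v : V} (hv : ¬ Isolatable G v) {I : Set V}
    (hI : IsIndep G I) (hvI : v ∉ closedNbhd G I) : ∃ u ∉ closedNbhd G I, G.Adj v u := by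
  by_contra! hc
  exact hv ⟨I, hI, hvI, hc⟩

end IndependentSets

section DirectProduct

variable {V W : Type*} {G : SimpleGraph V} {H : SimpleGraph W}

theorem isMaxIndep_directProd (hH : ∀ w, ∃ x, H.Adj w x) {A : Set V} (hA : IsIndep G A)
    (hAc : ∀ v ∉ closedNbhd G A, ∃ u ∉ closedNbhd G A, G.Adj v u)
    {D : Set W} (hD : IsMaxIndep H D) :
    IsMaxIndep (directProd G H) (A ×ˢ Set.univ ∪ (closedNbhd G A)ᶜ ×ˢ D) := by
  refine isMaxIndep_of_forall_exists_adj ?_ ?_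
  · rintro ⟨a, b⟩ (⟨ha, -⟩ | ⟨ha, hb⟩) ⟨c, d⟩ (⟨hc, -⟩ | ⟨hc, hd⟩) ⟨hac, hbd⟩
    · exact hA ha hc hac
    · exact hc (Or.inr ⟨a, ha, hac⟩)
    · exact ha (Or.inr ⟨c, hc, hac.symm⟩)
    · exact hD.1 hb hd hbd
  · rintro ⟨v, w⟩ hvw
    by_cases hv : v ∈ closedNbhd G A
    · rcases hv with hvA | ⟨a, haA, hav⟩
      · exact absurd (Or.inl ⟨hvA, Set.mem_univ w⟩) hvw
      · obtain ⟨x, hwx⟩ := hH w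
        exact ⟨(a, x), Or.inl ⟨haA, Set.mem_univ x⟩, hav.symm, hwx⟩
    · have hwD : w ∉ D := fun hwD => hvw (Or.inr ⟨hv, hwD⟩)
      obtain ⟨d, hd, hwd⟩ := hD.exists_adj hwD
      obtain ⟨u, hu, hvu⟩ := hAc v hv
      exact ⟨(u, d), Or.inr ⟨hu, hd⟩, hvu, hwd⟩

theorem ncard_prod_univ_union_compl_closedNbhd_prod [Finite V] [Finite W] (A : Set V)
    (D : Set W) :
    (A ×ˢ Set.univ ∪ (closedNbhd G A)ᶜ ×ˢ D).ncard =
      A.ncard * Nat.card W + (closedNbhd G A)ᶜ.ncard * D.ncard := by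
  have hdisj : Disjoint (A ×ˢ (Set.univ : Set W)) ((closedNbhd G A)ᶜ ×ˢ D) :=
    Set.disjoint_left.2 fun _ ha hc => hc.1 (Or.inl ha.1)
  rw [Set.ncard_union_eq hdisj, Set.ncard_prod, Set.ncard_prod, Set.ncard_univ]

theorem isMaxIndep_directProd_of_not_isolatable (hH : ∀ w, ∃ x, H.Adj w x)
    (hGiso : ∀ v, ¬ Isolatable G v) {A : Set V} (hA : IsIndep G A) {D : Set W}
    (hD : IsMaxIndep H D) :
    IsMaxIndep (directProd G H) (A ×ˢ Set.univ ∪ (closedNbhd G A)ᶜ ×ˢ D) :=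
  isMaxIndep_directProd hH hA (fun _ hv => exists_adj_notMem_closedNbhd (hGiso _) hA hv) hD

theorem ncard_mul_card_eq_ncard_closedNbhd_mul [Finite V] [Finite W]
    (hH : ∀ w, ∃ x, H.Adj w x) (hGiso : ∀ v, ¬ Isolatable G v)
    (hwc : WellCovered (directProd G H)) {D : Set W} (hD : IsMaxIndep H D)
    {A : Set V} (hA : IsIndep G A) :
    A.ncard * Nat.card W = (closedNbhd G A).ncard * D.ncard := by
  have hsize := hwc _ _ (isMaxIndep_directProd_of_not_isolatable hH hGiso hA hD)
    (isMaxIndep_directProd_of_not_isolatable hH hGiso .empty hD)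
  rw [ncard_prod_univ_union_compl_closedNbhd_prod, ncard_prod_univ_union_compl_closedNbhd_prod,
    closedNbhd_empty, Set.compl_empty, Set.ncard_empty, zero_mul, zero_add, Set.ncard_univ,
    ← Set.ncard_add_ncard_compl (closedNbhd G A), add_mul] at hsize
  omega

theorem ncard_closedNbhd_mul_indepNum [Finite V] [Finite W] [Nonempty W]
    (hH : ∀ w, ∃ x, H.Adj w x) (hGiso : ∀ v, ¬ Isolatable G v) (hwc : WellCovered (directProd G H))
    {A : Set V} (hA : IsIndep G A) :
    (closedNbhd G A).ncard * indepNum G = A.ncard * Nat.card V := by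
  obtain ⟨D, hD, -⟩ := (IsIndep.empty : IsIndep H ∅).exists_isMaxIndep_superset
  obtain ⟨M, hM, hMcard⟩ := exists_isMaxIndep_ncard_eq_indepNum (G := G)
  have hAD := ncard_mul_card_eq_ncard_closedNbhd_mul hH hGiso hwc hD hA
  have hMD := ncard_mul_card_eq_ncard_closedNbhd_mul hH hGiso hwc hD hM.1
  rw [hMcard, hM.closedNbhd_eq_univ, Set.ncard_univ] at hMD
  refine Nat.eq_of_mul_eq_mul_right hD.nonempty.ncard_pos ?_
  calc (closedNbhd G A).ncard * indepNum G * D.ncard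
      = A.ncard * (indepNum G * Nat.card W) := by rw [mul_right_comm, ← hAD]; ring
    _ = A.ncard * Nat.card V * D.ncard := by rw [hMD, mul_assoc]

end DirectProduct

theorem stmt13_general {V W : Type*} [Fintype V] [Fintype W] (G : SimpleGraph V) (H : SimpleGraph W)
    (hHconn : H.Connected) (hHnt : 1 < Fintype.card W)
    (hGiso : ∀ v, ¬ Isolatable G v)
    (hwc : WellCovered (directProd G H))
    (k : ℕ)
    (A : Set V) (hA : IsIndep G A) (hAcard : A.ncard = k) :
    ((closedNbhd G A).ncard : ℚ) = k * Fintype.card V / indepNum G := by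
  have : Nontrivial W := Fintype.one_lt_card_iff_nontrivial.1 hHnt
  have key := ncard_closedNbhd_mul_indepNum hHconn.preconnected.exists_adj_of_nontrivial
    hGiso hwc hA
  rcases eq_or_ne (indepNum G) 0 with h0 | h0
  · obtain rfl : A = ∅ := (Set.ncard_eq_zero).1 (Nat.le_zero.1 (h0 ▸ hA.ncard_le_indepNum))
    simp [closedNbhd_empty, h0]
  · rw [eq_div_iff (by exact_mod_cast h0), ← hAcard, ← Nat.card_eq_fintype_card]
    exact_mod_cast key

theorem stmt13 {V W : Type*} [Fintype V] [Fintype W] (G : SimpleGraph V) (H : SimpleGraph W)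
    (hHconn : H.Connected) (hHnt : 1 < Fintype.card W)
    (hGiso : ∀ v, ¬ Isolatable G v)
    (hwc : WellCovered (directProd G H))
    (k : ℕ) (hk1 : 1 ≤ k) (hk2 : k ≤ indepNum G)
    (A : Set V) (hA : IsIndep G A) (hAcard : A.ncard = k) :
    ((closedNbhd G A).ncard : ℚ) = k * Fintype.card V / indepNum G :=
  stmt13_general G H hHconn hHnt hGiso hwc k A hA hAcard
end

section
/- Let G be a nontrivial connected graph. If G × K_3 is well-covered, then either G is the complete graph K_3 or G has at least one isolatable vertex. -/
/-! If no vertex of `G` is isolatable, then for every independent set `B` of `G` the set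
`(B ∪ V ∖ N[B]) × {0} ∪ B × {1, 2}` is a maximal independent set of `G × K₃` (a vertex outside
`N[B]` has a neighbour outside `N[B]`, else `B` would isolate it), and so is `V × {0}`. Well-coveredness makes their sizes equal, which reads `|N[B]| = 3 |B|`. For single
vertices this gives `|N[v]| = 3`, and for a nonadjacent pair `x, y` it gives `|N[x] ∪ N[y]| = 6`,
so `N[x]` and `N[y]` are disjoint: two vertices with a common neighbour are adjacent. In a
connected graph this makes `G` complete, and then `|V| = |N[v]| = 3`. -/

open Set

section

variable {V W : Type*} {G : SimpleGraph V}

theorem IsIndep.isMaxIndep {s : Set V} (hs : IsIndep G s)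
    (hdom : ∀ v ∉ s, ∃ u ∈ s, G.Adj v u) : IsMaxIndep G s := by
  refine ⟨hs, fun t ht hst => hst.antisymm fun v hv => ?_⟩
  by_contra hvs
  obtain ⟨u, hu, hvu⟩ := hdom v hvs
  exact ht hv (hst hu) hvu

theorem isIndep_singleton (v : V) : IsIndep G {v} := by
  rintro u rfl w rfl h
  exact G.irrefl h

theorem isIndep_pair {x y : V} (h : ¬ G.Adj x y) : IsIndep G {x, y} := by
  rintro u (rfl | rfl) w (rfl | rfl) huw
  exacts [G.irrefl huw, h huw, h huw.symm, G.irrefl huw]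

theorem mem_closedNbhd_singleton {x v : V} : v ∈ closedNbhd G {x} ↔ v = x ∨ G.Adj x v := by
  simp [closedNbhd]

theorem closedNbhd_union (s t : Set V) :
    closedNbhd G (s ∪ t) = closedNbhd G s ∪ closedNbhd G t := by
  ext v
  simp only [closedNbhd, mem_union, mem_ofPred_eq]
  grind

theorem exists_adj_notMem_closedNbhd_of_not_isolatable {B : Set V} {a : V}
    (hiso : ¬ Isolatable G a) (hB : IsIndep G B) (ha : a ∉ closedNbhd G B) :
    ∃ u ∉ closedNbhd G B, G.Adj a u := by
  by_contra! h
  exact hiso ⟨B, hB, ha, h⟩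

theorem isMaxIndep_univ_prod_singleton (hG : NoIsolated G) (i : W) :
    IsMaxIndep (directProd G ⊤) (univ ×ˢ {i}) := by
  refine IsIndep.isMaxIndep ?_ fun p hp => ?_
  · rintro p ⟨-, hp⟩ q ⟨-, hq⟩ h
    exact h.2 (hp.trans hq.symm)
  · obtain ⟨u, hu⟩ := hG p.1
    exact ⟨(u, i), ⟨mem_univ u, rfl⟩, hu, fun h => hp ⟨mem_univ _, h⟩⟩

theorem isMaxIndep_prod_fin_three {B : Set V} (hiso : ∀ v, ¬ Isolatable G v)
    (hB : IsIndep G B) :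
    IsMaxIndep (directProd G ⊤) ((B ∪ (closedNbhd G B)ᶜ) ×ˢ {(0 : Fin 3)} ∪ B ×ˢ {1, 2}) := by
  have hBA : ∀ a ∈ B ∪ (closedNbhd G B)ᶜ, ∀ b ∈ B, ¬ G.Adj a b := by
    rintro a (ha | ha) b hb hab
    exacts [hB ha hb hab, ha (Or.inr ⟨b, hb, hab.symm⟩)]
  refine IsIndep.isMaxIndep ?_ ?_
  · rintro ⟨a, i⟩ ha ⟨b, j⟩ hb ⟨hab, hij⟩
    simp only [mem_union, mem_prod, mem_singleton_iff, mem_insert_iff] at ha hb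
    rcases ha with ⟨ha, rfl⟩ | ⟨ha, -⟩ <;> rcases hb with ⟨hb, rfl⟩ | ⟨hb, -⟩
    exacts [hij.ne rfl, hBA a ha b hb hab, hBA b hb a ha hab.symm, hB ha hb hab]
  · rintro ⟨a, i⟩ ha
    simp only [mem_union, mem_prod, mem_singleton_iff, mem_insert_iff, not_or, not_and] at ha
    by_cases haN : a ∈ closedNbhd G B
    · rcases haN with haB | ⟨u, huB, hua⟩
      · fin_cases i <;> simp_all
      · refine ⟨(u, if i = 0 then 1 else 0), ?_, hua.symm, ?_⟩ <;> split_ifs <;> simp_all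
    · obtain ⟨u, hu, hau⟩ := exists_adj_notMem_closedNbhd_of_not_isolatable (hiso a) hB haN
      exact ⟨(u, 0), Or.inl ⟨Or.inr hu, rfl⟩, hau, fun hi => ha.1 (Or.inr haN) hi⟩

theorem ncard_closedNbhd_eq_three_mul [Finite V] {B : Set V} (hG : NoIsolated G)
    (hiso : ∀ v, ¬ Isolatable G v) (hwc : WellCovered (directProd G (⊤ : SimpleGraph (Fin 3))))
    (hB : IsIndep G B) : (closedNbhd G B).ncard = 3 * B.ncard := by
  have hcard := hwc _ _ (isMaxIndep_prod_fin_three hiso hB) (isMaxIndep_univ_prod_singleton hG 0)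
  have hBN : Disjoint B (closedNbhd G B)ᶜ := disjoint_compl_right_iff_subset.2 subset_union_left
  rw [ncard_union_eq (disjoint_prod.2 (Or.inr (by simp))), ncard_prod, ncard_prod, ncard_prod,
    ncard_union_eq hBN, ncard_univ, ncard_singleton, ncard_pair (by decide)] at hcard
  have hcompl := ncard_add_ncard_compl (closedNbhd G B)
  have hBle : B.ncard ≤ (closedNbhd G B).ncard := ncard_le_ncard subset_union_left
  omega

theorem ncard_closedNbhd_singleton
    (hN : ∀ B, IsIndep G B → (closedNbhd G B).ncard = 3 * B.ncard) (v : V) :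
    (closedNbhd G {v}).ncard = 3 := by
  simpa using hN _ (isIndep_singleton v)

theorem adj_of_adj_of_adj [Finite V]
    (hN : ∀ B, IsIndep G B → (closedNbhd G B).ncard = 3 * B.ncard)
    {x y z : V} (hxz : G.Adj x z) (hzy : G.Adj z y) (hxy : x ≠ y) : G.Adj x y := by
  by_contra h
  have hdisj : Disjoint (closedNbhd G {x}) (closedNbhd G {y}) := by
    rw [← ncard_union_eq_iff, ← closedNbhd_union, ← insert_eq, hN _ (isIndep_pair h),
      ncard_pair hxy, ncard_closedNbhd_singleton hN, ncard_closedNbhd_singleton hN]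
  exact disjoint_left.1 hdisj (mem_closedNbhd_singleton.2 (Or.inr hxz))
    (mem_closedNbhd_singleton.2 (Or.inr hzy.symm))

theorem eq_or_adj_of_reachable [Finite V]
    (hN : ∀ B, IsIndep G B → (closedNbhd G B).ncard = 3 * B.ncard)
    {x y : V} (h : G.Reachable x y) : x = y ∨ G.Adj x y := by
  rw [SimpleGraph.reachable_iff_reflTransGen] at h
  induction h with
  | refl => exact Or.inl rfl
  | @tail z w _ hzw ih =>
    rcases ih with rfl | hxz
    · exact Or.inr hzw
    · exact (eq_or_ne x w).imp_right (adj_of_adj_of_adj hN hxz hzw)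

theorem eq_top_of_ncard_closedNbhd [Finite V]
    (hN : ∀ B, IsIndep G B → (closedNbhd G B).ncard = 3 * B.ncard) (hconn : G.Connected) :
    G = ⊤ := by
  ext x y
  exact ⟨G.ne_of_adj, fun hxy => (eq_or_adj_of_reachable hN (hconn x y)).resolve_left hxy⟩

theorem card_eq_three_of_ncard_closedNbhd [Finite V]
    (hN : ∀ B, IsIndep G B → (closedNbhd G B).ncard = 3 * B.ncard) (hconn : G.Connected) :
    Nat.card V = 3 := by
  obtain ⟨v⟩ := hconn.nonempty
  have huniv : closedNbhd G {v} = univ := by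
    rw [eq_top_of_ncard_closedNbhd hN hconn]
    exact eq_univ_of_forall fun u =>
      mem_closedNbhd_singleton.2 ((eq_or_ne u v).imp_right Ne.symm)
  rw [← ncard_univ, ← huniv, ncard_closedNbhd_singleton hN]

end

theorem stmt15 {V : Type*} [Fintype V] (G : SimpleGraph V)
    (hconn : G.Connected) (hnt : 1 < Fintype.card V)
    (hwc : WellCovered (directProd G (⊤ : SimpleGraph (Fin 3)))) :
    (G = ⊤ ∧ Fintype.card V = 3) ∨ ∃ v, Isolatable G v := by
  refine or_iff_not_imp_right.2 fun hiso => ?_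
  have : Nontrivial V := Fintype.one_lt_card_iff_nontrivial.1 hnt
  have hN B (hB : IsIndep G B) : (closedNbhd G B).ncard = 3 * B.ncard :=
    ncard_closedNbhd_eq_three_mul hconn.preconnected.exists_adj_of_nontrivial
      (not_exists.1 hiso) hwc hB
  exact ⟨eq_top_of_ncard_closedNbhd hN hconn,
    Nat.card_eq_fintype_card (α := V) ▸ card_eq_three_of_ncard_closedNbhd hN hconn⟩
end
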